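/- For every s ≥ 0 with 2s + 3 < N, setting Q = q̃_+^{2s+1} + (z/2)·q̃_-^{2s+2}, the following identities hold: [H_e, Q] = q̃_-^{2s+2} − z·q̃_e^{2s+3}, [H_e, [H_e, Q]] = −2·q̃_e^{2s+3}, [H_e, [H_e, [H_e, Q]]] = 0; [H_o, Q] = −q̃_-^{2s+2} + z·q̃_o^{2s+3}, [H_o, [H_o, Q]] = −2·q̃_o^{2s+3}, [H_o, [H_o, [H_o, Q]]] = 0; and consequently Q − z·[H_e, Q] + (z²/2)·[H_e, [H_e, Q]] = q̃_+^{2s+1} − (z/2)·q̃_-^{2s+2} = Q + z·[H_o, Q] + (z²/2)·[H_o, [H_o, Q]]. -/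

import Mathlib

/-- Commutator `[x, y] = x*y - y*x` in a (not necessarily unital) ring. -/
def cm {A : Type*} [NonUnitalRing A] (x y : A) : A := x * y - y * x

/-- Right-nested iterated commutator `q_i^m = [e_i, [e_{i+1}, ⋯, [e_{i+m-2}, e_{i+m-1}]⋯]]`
(indices mod `N`). -/
def qq {A : Type*} [NonUnitalRing A] {N : ℕ} (e : ZMod N → A) : ℕ → ZMod N → A
  | 0, _ => 0
  | 1, i => e i
  | (m + 2), i => cm (e i) (qq e (m + 1) (i + 1))

/-- `q_+^m = Σ_{i=0}^{N-1} q_i^m`. -/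
def qplus {A : Type*} [NonUnitalRing A] {N : ℕ} (e : ZMod N → A) (m : ℕ) : A :=
  ∑ i ∈ Finset.range N, qq e m (i : ZMod N)

/-- `q_-^m = Σ_{i=0}^{N-1} (-1)^i q_i^m`. -/
def qminus {A : Type*} [NonUnitalRing A] {N : ℕ} (e : ZMod N → A) (m : ℕ) : A :=
  ∑ i ∈ Finset.range N, ((-1 : ℤ) ^ i) • qq e m (i : ZMod N)

/-- `q_e^m = Σ_{i even} q_i^m` (sum over `0 ≤ i < N`). -/
def qev {A : Type*} [NonUnitalRing A] {N : ℕ} (e : ZMod N → A) (m : ℕ) : A :=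
  ∑ i ∈ Finset.range N, if Even i then qq e m (i : ZMod N) else 0

/-- `q_o^m = Σ_{i odd} q_i^m` (sum over `0 ≤ i < N`). -/
def qod {A : Type*} [NonUnitalRing A] {N : ℕ} (e : ZMod N → A) (m : ℕ) : A :=
  ∑ i ∈ Finset.range N, if Odd i then qq e m (i : ZMod N) else 0

/-- Tilde charges: `q̃^m = Σ_{l=0}^{⌊(m-1)/2⌋} C(m-1, l) • q^{m-2l}`. -/
def qt {A : Type*} [NonUnitalRing A] (qf : ℕ → A) (m : ℕ) : A :=
  ∑ l ∈ Finset.range ((m - 1) / 2 + 1), ((m - 1).choose l : ℤ) • qf (m - 2 * l)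

/-!
Everything rests on the local relation, valid for `1 ≤ m ≤ N - 2`,
  `[e_j, q_i^m] = δ_{j,i-1} q_{i-1}^{m+1} - δ_{j,i+m} q_i^{m+1}
                  + c_m (δ_{j,i+1} q_{i+1}^{m-1} - δ_{j,i+m-2} q_i^{m-1})`
with `c_2 = 2` and `c_m = 1` otherwise. It is proved by induction on the distance from `i` to
`j`: away from the string `e_i, …, e_{i+m-1}` the generator `e_j` commutes past `e_i`, and next to
it `e_i² = 0` and `e_i e_{i±1} e_i = e_i` do the work. Summing it against weights that depend only
on the parity of the site gives `[H_e, q_+^m] = q_-^{m+1} + q_-^{m-1}` for odd `m` and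
`[H_e, q_-^m] = -2 (q_e^{m+1} + c_m q_e^{m-1})` for even `m`, and the same with `(H_e, q_e)`
replaced by `(-H_o, q_o)`; moreover `[H_e, q_e^m] = 0` for odd `m ≤ N - 1`, because `e_j` commutes
with `q_i^m` whenever `j - i` is even. Pascal's rule, with `C(2s+2, s+1) = 2 C(2s+1, s)` absorbing
`c_2`, lifts these to `[H, q̃_+^{2s+1}] = q̃_-^{2s+2}`, `[H, q̃_-^{2s+2}] = -2 q̃^{2s+3}` and
`[H, q̃^{2s+3}] = 0`, so `[H, ·]` acts nilpotently on `Q` and the rest is linear algebra.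
-/

open Finset

section Commutator

variable {A : Type*} [NonUnitalRing A]

theorem cm_self (x : A) : cm x x = 0 := sub_self _

theorem cm_eq_zero_of_commute {x y : A} (h : Commute x y) : cm x y = 0 := by
  simp [cm, h.eq]

theorem cm_comm (x y : A) : cm x y = -cm y x := (neg_sub _ _).symm

theorem cm_add_right (x y z : A) : cm x (y + z) = cm x y + cm x z := by
  simp only [cm, mul_add, add_mul]; abel

theorem cm_sub_right (x y z : A) : cm x (y - z) = cm x y - cm x z := by
  simp only [cm, mul_sub, sub_mul]; abel

theorem cm_neg_right (x y : A) : cm x (-y) = -cm x y := by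
  simp only [cm, mul_neg, neg_mul]; abel

theorem cm_neg_left (x y : A) : cm (-x) y = -cm x y := by
  simp only [cm, mul_neg, neg_mul]; abel

theorem cm_smul_right {R : Type*} [Monoid R] [DistribMulAction R A] [SMulCommClass R A A]
    [IsScalarTower R A A] (c : R) (x y : A) : cm x (c • y) = c • cm x y := by
  simp only [cm, mul_smul_comm, smul_mul_assoc, smul_sub]

theorem cm_smul_left {R : Type*} [Monoid R] [DistribMulAction R A] [SMulCommClass R A A]
    [IsScalarTower R A A] (c : R) (x y : A) : cm (c • x) y = c • cm x y := by
  simp only [cm, mul_smul_comm, smul_mul_assoc, smul_sub]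

theorem cm_sum_right {ι : Type*} (s : Finset ι) (x : A) (f : ι → A) :
    cm x (∑ i ∈ s, f i) = ∑ i ∈ s, cm x (f i) := by
  simp only [cm, mul_sum, sum_mul, ← sum_sub_distrib]

theorem cm_sum_left {ι : Type*} (s : Finset ι) (f : ι → A) (y : A) :
    cm (∑ i ∈ s, f i) y = ∑ i ∈ s, cm (f i) y := by
  simp only [cm, mul_sum, sum_mul, ← sum_sub_distrib]

theorem cm_cm_comm_of_commute {a b : A} (h : Commute a b) (x : A) :
    cm a (cm b x) = cm b (cm a x) := by
  have h' : ∀ y : A, a * (b * y) = b * (a * y) := fun y => by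
    rw [← mul_assoc, h.eq, mul_assoc]
  simp only [cm, mul_sub, sub_mul, mul_assoc, h', h.eq]
  abel

theorem cm_cm_of_mul_self_eq_zero {a : A} (ha : a * a = 0) (x : A) :
    cm a (cm a x) = (-2 : ℤ) • (a * x * a) := by
  have ha' : ∀ y : A, a * (a * y) = 0 := fun y => by rw [← mul_assoc, ha, zero_mul]
  simp only [cm, mul_sub, sub_mul, mul_assoc, ha', ha, mul_zero, neg_smul, two_smul]
  abel

theorem mul_cm_mul_eq_zero {a b z : A} (haba : a * b * a = a) (hz : Commute a z) :
    a * cm b z * a = 0 := by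
  have h₁ : a * b * z * a = a * z := by rw [mul_assoc _ z, ← hz.eq, ← mul_assoc, haba]
  have h₂ : a * z * b * a = a * z := by
    rw [hz.eq, mul_assoc z, mul_assoc z, haba]
  simp only [cm, mul_sub, sub_mul, ← mul_assoc, h₁, h₂, sub_self]

theorem cm_cm_eq_two_smul {a b : A} (hb : b * b = 0) (hbab : b * a * b = b) :
    cm b (cm a b) = (2 : ℤ) • b := by
  have hb' : ∀ y : A, b * (b * y) = 0 := fun y => by rw [← mul_assoc, hb, zero_mul]
  simp only [cm, mul_sub, sub_mul, mul_assoc, hb', hb, mul_zero, ← mul_assoc b a b, hbab,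
    two_smul]
  abel

theorem cm_cm_cm_eq {a b z : A} (hb : b * b = 0) (hbab : b * a * b = b) (hz : Commute a z) :
    cm b (cm a (cm b z)) = cm b z + b * z * b * a - a * (b * z * b) := by
  have hb' : ∀ y : A, b * (b * y) = 0 := fun y => by rw [← mul_assoc, hb, zero_mul]
  have hbab' : ∀ y : A, b * (a * (b * y)) = b * y := fun y => by
    rw [← mul_assoc, ← mul_assoc, hbab]
  have hbab'' : b * (a * b) = b := by rw [← mul_assoc, hbab]
  have hz' : ∀ y : A, a * (z * y) = z * (a * y) := fun y => by
    rw [← mul_assoc, hz.eq, mul_assoc]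
  simp only [cm, mul_sub, sub_mul, mul_assoc, hb', hbab', hbab'', hz', hb, mul_zero, sub_zero,
    zero_sub]
  abel

theorem cm_ite_zero (P : Prop) [Decidable P] (x y : A) :
    cm x (if P then y else 0) = if P then cm x y else 0 := by
  split_ifs <;> simp [cm]

theorem Commute.cm_right {a x y : A} (hx : Commute a x) (hy : Commute a y) :
    Commute a (cm x y) :=
  (hx.mul_right hy).sub_right (hy.mul_right hx)

end Commutator

theorem ZMod.natCast_ne_zero_of_pos_of_lt {N k : ℕ} (h0 : 0 < k) (hk : k < N) :
    (k : ZMod N) ≠ 0 := by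
  rw [Ne, ZMod.natCast_eq_zero_iff]
  exact fun h => absurd (Nat.le_of_dvd h0 h) (by omega)

structure IsPeriodicTL {A : Type*} [NonUnitalRing A] {N : ℕ} (e : ZMod N → A) : Prop where
  mul_self : ∀ i, e i * e i = 0
  mul_succ_mul : ∀ i, e i * e (i + 1) * e i = e i
  succ_mul_succ : ∀ i, e (i + 1) * e i * e (i + 1) = e (i + 1)
  mul_comm_of_ne : ∀ i j, j ≠ i - 1 → j ≠ i → j ≠ i + 1 → e i * e j = e j * e i

-- `[e_{i+1}, [e_i, e_{i+1}]] = 2 e_{i+1}` doubles the lowest term of `[e_j, q_i^2]`.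
def tlCoeff (m : ℕ) : ℤ := if m = 2 then 2 else 1

theorem tlCoeff_of_ne_two {m : ℕ} (hm : m ≠ 2) : tlCoeff m = 1 := if_neg hm

section LocalRelations

variable {A : Type*} [NonUnitalRing A] {N : ℕ} {e : ZMod N → A}

theorem qq_zero (i : ZMod N) : qq e 0 i = 0 := rfl

theorem qq_one (i : ZMod N) : qq e 1 i = e i := rfl

theorem qq_succ {m : ℕ} (hm : 1 ≤ m) (i : ZMod N) :
    qq e (m + 1) i = cm (e i) (qq e m (i + 1)) := by
  obtain ⟨k, rfl⟩ := Nat.exists_eq_add_of_le' hm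
  rfl

theorem cm_sub_one_qq {m : ℕ} (hm : 1 ≤ m) (i : ZMod N) :
    cm (e (i - 1)) (qq e m i) = qq e (m + 1) (i - 1) := by
  rw [qq_succ hm, sub_add_cancel]

theorem add_one_add_one (i : ZMod N) : i + 1 + 1 = i + (2 : ℕ) := by push_cast; ring

theorem commute_qq {j i : ZMod N} {m : ℕ} (h : ∀ k < m, Commute (e j) (e (i + k))) :
    Commute (e j) (qq e m i) := by
  induction m generalizing i with
  | zero => exact Commute.zero_right _
  | succ m ih =>
    rcases m with _ | m
    · simpa [qq_one] using h 0 (by omega)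
    · refine (by simpa using h 0 (by omega) : Commute (e j) (e i)).cm_right (ih fun k hk => ?_)
      have := h (k + 1) (by omega)
      rwa [Nat.cast_succ, add_comm (k : ZMod N), ← add_assoc] at this

theorem cm_add_one_qq_one (i : ZMod N) : cm (e (i + 1)) (qq e 1 i) = -qq e 2 i := cm_comm _ _

variable (he : IsPeriodicTL e)
include he

theorem IsPeriodicTL.commute_add (i : ZMod N) {a : ℕ} (h2a : 2 ≤ a) (haN : a + 2 ≤ N) :
    Commute (e i) (e (i + a)) := by
  refine he.mul_comm_of_ne i (i + a) (fun h => ?_) (fun h => ?_) (fun h => ?_)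
  · refine ZMod.natCast_ne_zero_of_pos_of_lt (k := a + 1) (N := N) (by omega) (by omega) ?_
    push_cast
    linear_combination h
  · refine ZMod.natCast_ne_zero_of_pos_of_lt (k := a) (N := N) (by omega) (by omega) ?_
    linear_combination h
  · refine ZMod.natCast_ne_zero_of_pos_of_lt (k := a - 1) (N := N) (by omega) (by omega) ?_
    rw [Nat.cast_sub (by omega)]
    push_cast
    linear_combination h

theorem IsPeriodicTL.commute_qq_add (i : ZMod N) {a m : ℕ} (h2a : 2 ≤ a) (h : a + m + 1 ≤ N) :
    Commute (e i) (qq e m (i + a)) :=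
  commute_qq fun k hk => by
    simpa [add_assoc] using he.commute_add i (a := a + k) (by omega) (by omega)

theorem IsPeriodicTL.cm_self_qq {m : ℕ} (hm : m + 1 ≤ N) (i : ZMod N) :
    cm (e i) (qq e m i) = if m = 2 then (-2 : ℤ) • e i else 0 := by
  match m, hm with
  | 0, _ => simp [qq_zero, cm]
  | 1, _ => simp [qq_one, cm_self]
  | 2, _ =>
    rw [if_pos rfl, show qq e 2 i = cm (e i) (e (i + 1)) from rfl,
      cm_cm_of_mul_self_eq_zero (he.mul_self i), he.mul_succ_mul]
  | k + 3, hk =>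
    have hz : Commute (e i) (qq e (k + 1) (i + 1 + 1)) := by
      rw [add_one_add_one]; exact he.commute_qq_add i le_rfl (by omega)
    rw [if_neg (by omega),
      show qq e (k + 3) i = cm (e i) (cm (e (i + 1)) (qq e (k + 1) (i + 1 + 1))) from rfl,
      cm_cm_of_mul_self_eq_zero (he.mul_self i), mul_cm_mul_eq_zero (he.mul_succ_mul i) hz,
      smul_zero]

theorem IsPeriodicTL.cm_add_one_qq_two (i : ZMod N) :
    cm (e (i + 1)) (qq e 2 i) = (2 : ℤ) • e (i + 1) :=
  cm_cm_eq_two_smul (he.mul_self _) (he.succ_mul_succ i)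

theorem IsPeriodicTL.cm_add_one_qq_of_three_le {m : ℕ} (h3 : 3 ≤ m) (hm : m + 1 ≤ N)
    (i : ZMod N) :
    cm (e (i + 1)) (qq e m i) = qq e (m - 1) (i + 1) - if m = 3 then qq e (m - 1) i else 0 := by
  obtain ⟨k, rfl⟩ := Nat.exists_eq_add_of_le' h3
  have hz : Commute (e i) (qq e (k + 1) (i + 1 + 1)) := by
    rw [add_one_add_one]; exact he.commute_qq_add i le_rfl (by omega)
  rw [show qq e (k + 3) i = cm (e i) (cm (e (i + 1)) (qq e (k + 1) (i + 1 + 1))) from rfl,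
    cm_cm_cm_eq (he.mul_self _) (he.succ_mul_succ i) hz]
  rcases k with _ | k
  · rw [if_pos rfl, qq_one, he.mul_succ_mul]
    simp only [cm, qq]
    abel
  · have hz' : Commute (e (i + 1)) (qq e (k + 1) (i + 1 + 1 + 1)) := by
      rw [add_one_add_one]; exact he.commute_qq_add (i + 1) le_rfl (by omega)
    rw [show qq e (k + 2) (i + 1 + 1) = cm (e (i + 1 + 1)) (qq e (k + 1) (i + 1 + 1 + 1))
        from rfl, mul_cm_mul_eq_zero (he.mul_succ_mul (i + 1)) hz', if_neg (by omega)]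
    simp only [zero_mul, mul_zero, add_zero, sub_zero]
    rfl

theorem IsPeriodicTL.cm_add_one_qq {m : ℕ} (hm1 : 1 ≤ m) (hm : m + 1 ≤ N) (i : ZMod N) :
    cm (e (i + 1)) (qq e m i) = -(if m = 1 then qq e (m + 1) i else 0) +
      tlCoeff m • (qq e (m - 1) (i + 1) - if m = 3 then qq e (m - 1) i else 0) := by
  match m, hm1, hm with
  | 1, _, _ => simp [cm_add_one_qq_one, tlCoeff, qq_zero]
  | 2, _, _ => simp [he.cm_add_one_qq_two, tlCoeff, qq_one]
  | k + 3, _, hm =>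
    rw [he.cm_add_one_qq_of_three_le (by omega) hm, tlCoeff, if_neg (show k + 3 ≠ 2 by omega),
      if_neg (show k + 3 ≠ 1 by omega)]
    simp

theorem IsPeriodicTL.cm_add_two_qq (hN : 4 ≤ N) {m : ℕ} (hm1 : 1 ≤ m) (hm : m + 1 ≤ N)
    (i : ZMod N) :
    cm (e (i + (2 : ℕ))) (qq e m i) =
      -((if 2 = m then qq e (m + 1) i else 0) + (if 2 + 2 = m then qq e (m - 1) i else 0)) := by
  have h02 := he.commute_add i le_rfl hN
  obtain ⟨k, rfl⟩ := Nat.exists_eq_add_of_le' hm1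
  rcases k with _ | k
  · rw [zero_add, qq_one, cm_eq_zero_of_commute h02.symm]
    simp
  rw [qq_succ (by omega), cm_cm_comm_of_commute h02.symm, ← add_one_add_one,
    he.cm_add_one_qq (by omega) (by omega) (i + 1)]
  have hfar : cm (e i) (qq e k (i + 1 + 1)) = 0 := by
    rw [add_one_add_one]
    exact cm_eq_zero_of_commute (he.commute_qq_add i le_rfl (by omega))
  obtain rfl | rfl | hk := (by omega : k = 0 ∨ k = 2 ∨ (k ≠ 0 ∧ k ≠ 2))
  · simp [qq_zero, cm_neg_right, ← qq_succ]
  · simp [cm_sub_right, hfar, tlCoeff, ← qq_succ]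
  · simp [cm_smul_right, hfar, hk.1, hk.2]

theorem IsPeriodicTL.cm_add_qq_of_two_le {d m : ℕ} (hd : 2 ≤ d) (hdN : d + 2 ≤ N)
    (hm1 : 1 ≤ m) (hm : m + 1 ≤ N) (i : ZMod N) :
    cm (e (i + d)) (qq e m i) =
      -((if d = m then qq e (m + 1) i else 0) + (if d + 2 = m then qq e (m - 1) i else 0)) := by
  induction d, hd using Nat.le_induction generalizing i m with
  | base => exact he.cm_add_two_qq (by omega) hm1 hm i
  | succ d hd ih =>
    have hfar := he.commute_add i (a := d + 1) (by omega) hdN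
    obtain ⟨k, rfl⟩ := Nat.exists_eq_add_of_le' hm1
    rcases k with _ | k
    · rw [zero_add, qq_one, cm_eq_zero_of_commute hfar.symm, if_neg (by omega), if_neg (by omega),
        add_zero, neg_zero]
    have hshift : i + ((d + 1 : ℕ) : ZMod N) = i + 1 + d := by push_cast; ring
    rw [qq_succ (by omega), cm_cm_comm_of_commute hfar.symm, hshift,
      ih (by omega) (by omega) (by omega) (i + 1), cm_neg_right, cm_add_right, cm_ite_zero,
      cm_ite_zero, ← qq_succ (by omega)]
    rcases k with _ | k
    · simp
    · simp only [← qq_succ (by omega : 1 ≤ k + 1), add_tsub_cancel_right,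
        show d = k + 1 + 1 ↔ d + 1 = k + 1 + 1 + 1 by omega,
        show d + 2 = k + 1 + 1 ↔ d + 1 + 2 = k + 1 + 1 + 1 by omega]

-- At `m = 1` the truncated `m - 2 = 0` is harmless: that term carries `q^0 = 0`.
theorem IsPeriodicTL.cm_add_qq {d m : ℕ} (hd : d < N) (hm1 : 1 ≤ m) (hm : m + 2 ≤ N)
    (i : ZMod N) :
    cm (e (i + d)) (qq e m i) =
      (if d = N - 1 then qq e (m + 1) (i - 1) else 0) - (if d = m then qq e (m + 1) i else 0) +
        tlCoeff m • ((if d = 1 then qq e (m - 1) (i + 1) else 0) -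
          (if d = m - 2 then qq e (m - 1) i else 0)) := by
  obtain rfl | rfl | hd2 | rfl :=
    (by omega : d = 0 ∨ d = 1 ∨ (2 ≤ d ∧ d + 2 ≤ N) ∨ d = N - 1)
  · rw [Nat.cast_zero, add_zero, he.cm_self_qq (by omega), if_neg (show 0 ≠ N - 1 by omega),
      if_neg (show 0 ≠ m by omega), if_neg (show 0 ≠ 1 by omega)]
    obtain rfl | rfl | hm3 := (by omega : m = 1 ∨ m = 2 ∨ 3 ≤ m)
    · simp [qq_zero]
    · simp [qq_one, tlCoeff]
    · rw [if_neg (show m ≠ 2 by omega), if_neg (show 0 ≠ m - 2 by omega)]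
      simp
  · rw [Nat.cast_one, he.cm_add_one_qq hm1 (by omega), if_neg (show 1 ≠ N - 1 by omega),
      if_pos rfl]
    simp only [eq_comm (a := 1), show m - 2 = 1 ↔ m = 3 by omega]
    abel
  · rw [he.cm_add_qq_of_two_le hd2.1 hd2.2 hm1 (by omega), if_neg (show d ≠ N - 1 by omega),
      if_neg (show d ≠ 1 by omega)]
    by_cases hdm : d + 2 = m
    · rw [if_pos hdm, if_pos (show d = m - 2 by omega), tlCoeff, if_neg (show m ≠ 2 by omega)]
      abel
    · rw [if_neg hdm, if_neg (show d ≠ m - 2 by omega)]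
      simp
  · have hsub : i + ((N - 1 : ℕ) : ZMod N) = i - 1 := by
      rw [Nat.cast_sub (by omega), ZMod.natCast_self]; ring
    rw [hsub, cm_sub_one_qq hm1, if_pos rfl, if_neg (show N - 1 ≠ m by omega),
      if_neg (show N - 1 ≠ 1 by omega), if_neg (show N - 1 ≠ m - 2 by omega)]
    simp

theorem IsPeriodicTL.cm_add_qq_eq_zero {d m : ℕ} (hd : Even d) (hdN : d + 2 ≤ N) (hm : Odd m)
    (hmN : m + 1 ≤ N) (i : ZMod N) : cm (e (i + d)) (qq e m i) = 0 := by
  obtain rfl | hd2 : d = 0 ∨ 2 ≤ d := by obtain ⟨k, rfl⟩ := hd; omega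
  · rw [Nat.cast_zero, add_zero, he.cm_self_qq hmN,
      if_neg (by rintro rfl; exact absurd hm (by decide))]
  · rw [he.cm_add_qq_of_two_le hd2 hdN hm.pos hmN,
      if_neg (by rintro rfl; exact Nat.not_even_iff_odd.mpr hm hd),
      if_neg (by rintro rfl; exact Nat.not_even_iff_odd.mpr hm (hd.add even_two))]
    simp

end LocalRelations

section Charges

variable {A : Type*} [NonUnitalRing A] {N : ℕ} [NeZero N]

theorem ZMod.sum_range_natCast {M : Type*} [AddCommMonoid M] (f : ZMod N → M) :
    ∑ i ∈ range N, f i = ∑ x, f x :=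
  sum_nbij' (fun i => i) ZMod.val (by simp) (by simp [ZMod.val_lt])
    (fun i hi => ZMod.val_cast_of_lt (mem_range.1 hi)) (fun x _ => ZMod.natCast_zmod_val x)
    (fun _ _ => rfl)

theorem ZMod.sum_eq_sum_range_add {M : Type*} [AddCommMonoid M] (f : ZMod N → M)
    (x : ZMod N) :
    ∑ j, f j = ∑ d ∈ range N, f (x + d) := by
  rw [ZMod.sum_range_natCast fun d => f (x + d)]
  exact (Equiv.sum_comp (Equiv.addLeft x) f).symm

def charge (e : ZMod N → A) (w : ZMod N → ℤ) (m : ℕ) : A := ∑ x, w x • qq e m x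

variable {e : ZMod N → A}

theorem charge_zero_right (w : ZMod N → ℤ) : charge e w 0 = 0 := by simp [charge, qq_zero]

theorem charge_mul_left (k : ℤ) (w : ZMod N → ℤ) (m : ℕ) :
    charge e (fun x => k * w x) m = k • charge e w m := by
  simp [charge, smul_sum, mul_smul]

theorem charge_neg (w : ZMod N → ℤ) (m : ℕ) : charge e (-w) m = -charge e w m := by
  simp [charge, neg_smul]

theorem cm_charge_one (w w' : ZMod N → ℤ) (m : ℕ) :
    cm (charge e w 1) (charge e w' m) = ∑ x, w' x • ∑ j, w j • cm (e j) (qq e m x) := by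
  simp only [charge, qq_one, cm_sum_left, cm_sum_right, cm_smul_left, cm_smul_right, smul_sum]

theorem IsPeriodicTL.sum_smul_cm_qq (he : IsPeriodicTL e) (w : ZMod N → ℤ) {m : ℕ}
    (hm1 : 1 ≤ m) (hm : m + 2 ≤ N) (x : ZMod N) :
    ∑ j, w j • cm (e j) (qq e m x) =
      w (x - 1) • qq e (m + 1) (x - 1) - w (x + m) • qq e (m + 1) x +
        tlCoeff m •
          (w (x + 1) • qq e (m - 1) (x + 1) - w (x + (m - 2 : ℕ)) • qq e (m - 1) x) := by
  rw [ZMod.sum_eq_sum_range_add _ x,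
    sum_congr rfl fun d hd => by rw [he.cm_add_qq (mem_range.1 hd) hm1 hm]]
  simp [smul_add, smul_sub, smul_ite, sum_add_distrib, sum_sub_distrib, smul_comm _ (tlCoeff m),
    ← sub_eq_add_neg, NeZero.pos, (by omega : m < N), (by omega : m - 2 < N), (by omega : 1 < N)]

theorem IsPeriodicTL.cm_charge_one_charge (he : IsPeriodicTL e) (w w' : ZMod N → ℤ) {m : ℕ}
    (hm1 : 1 ≤ m) (hm : m + 2 ≤ N) :
    cm (charge e w 1) (charge e w' m) =
      charge e (fun x => w x * w' (x + 1) - w (x + m) * w' x) (m + 1) +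
        tlCoeff m •
          charge e (fun x => w x * w' (x - 1) - w (x + (m - 2 : ℕ)) * w' x) (m - 1) := by
  have shift (f : ZMod N → A) (c : ZMod N) : ∑ x, f (x + c) = ∑ x, f x :=
    Equiv.sum_comp (Equiv.addRight c) f
  rw [cm_charge_one]
  simp only [he.sum_smul_cm_qq w hm1 hm, smul_add, smul_sub, sum_add_distrib, sum_sub_distrib,
    smul_comm (w' _) (tlCoeff m), ← smul_sum]
  rw [← shift (fun x => w' x • w (x - 1) • qq e (m + 1) (x - 1)) 1,
    ← shift (fun x => w' x • w (x + 1) • qq e (m - 1) (x + 1)) (-1)]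
  simp only [charge, sub_smul, mul_smul, sum_sub_distrib, add_sub_cancel_right, ← sub_eq_add_neg,
    sub_add_cancel, smul_sub, smul_comm (w' _)]

theorem IsPeriodicTL.cm_charge_one_charge_eq_zero (he : IsPeriodicTL e) (hN : Even N)
    {w w' : ZMod N → ℤ} (hw : ∀ x (d : ℕ), Odd d → w (x + d) * w' x = 0) {m : ℕ}
    (hm : Odd m) (hmN : m + 1 ≤ N) : cm (charge e w 1) (charge e w' m) = 0 := by
  rw [cm_charge_one]
  refine sum_eq_zero fun x _ => ?_
  rw [ZMod.sum_eq_sum_range_add _ x, smul_sum]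
  refine sum_eq_zero fun d hd => ?_
  rcases Nat.even_or_odd d with hd' | hd'
  · have hdN : d + 2 ≤ N := by
      obtain ⟨a, rfl⟩ := hd'; obtain ⟨b, rfl⟩ := hN; have := mem_range.1 hd; omega
    rw [he.cm_add_qq_eq_zero hd' hdN hm hmN, smul_zero, smul_zero]
  · rw [smul_smul, mul_comm, hw x d hd', zero_smul]

end Charges

def evenWeight : ZMod 2 → ℤ := fun t => if t = 0 then 1 else 0

def oddWeight : ZMod 2 → ℤ := fun t => if t = 1 then 1 else 0

def signWeight : ZMod 2 → ℤ := fun t => if t = 0 then 1 else -1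

section Parity

variable {A : Type*} [NonUnitalRing A] {N : ℕ} [NeZero N] {e : ZMod N → A}

theorem sum_range_smul_qq_eq_charge (h2 : 2 ∣ N) (f : ZMod 2 → ℤ) (m : ℕ) :
    ∑ i ∈ range N, f i • qq e m i = charge e (f ∘ ZMod.castHom h2 (ZMod 2)) m := by
  rw [charge, ← ZMod.sum_range_natCast]
  simp

theorem qplus_eq_charge (h2 : 2 ∣ N) (m : ℕ) :
    qplus e m = charge e ((fun _ => 1) ∘ ZMod.castHom h2 (ZMod 2)) m := by
  simp [← sum_range_smul_qq_eq_charge, qplus]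

theorem qminus_eq_charge (h2 : 2 ∣ N) (m : ℕ) :
    qminus e m = charge e (signWeight ∘ ZMod.castHom h2 (ZMod 2)) m := by
  rw [← sum_range_smul_qq_eq_charge, qminus]
  refine sum_congr rfl fun i _ => congrArg (· • _) ?_
  rcases Nat.even_or_odd i with h | h
  · simp [signWeight, h.neg_one_pow, ZMod.natCast_eq_zero_iff_even.2 h]
  · simp [signWeight, h.neg_one_pow, ZMod.natCast_eq_one_iff_odd.2 h]

theorem qev_eq_charge (h2 : 2 ∣ N) (m : ℕ) :
    qev e m = charge e (evenWeight ∘ ZMod.castHom h2 (ZMod 2)) m := by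
  simp [← sum_range_smul_qq_eq_charge, qev, evenWeight, ZMod.natCast_eq_zero_iff_even, ite_smul]

theorem qod_eq_charge (h2 : 2 ∣ N) (m : ℕ) :
    qod e m = charge e (oddWeight ∘ ZMod.castHom h2 (ZMod 2)) m := by
  simp [← sum_range_smul_qq_eq_charge, qod, oddWeight, ZMod.natCast_eq_one_iff_odd, ite_smul]

variable (he : IsPeriodicTL e)
include he

theorem IsPeriodicTL.cm_charge_one_charge_comp_castHom (h2 : 2 ∣ N) {f f' g : ZMod 2 → ℤ}
    {k : ℤ} {m : ℕ} (hm1 : 1 ≤ m) (hm : m + 2 ≤ N)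
    (hg : ∀ t, f t * f' (t + 1) - f (t + m) * f' t = k * g t) :
    cm (charge e (f ∘ ZMod.castHom h2 (ZMod 2)) 1)
        (charge e (f' ∘ ZMod.castHom h2 (ZMod 2)) m) =
      k • (charge e (g ∘ ZMod.castHom h2 (ZMod 2)) (m + 1) +
        tlCoeff m • charge e (g ∘ ZMod.castHom h2 (ZMod 2)) (m - 1)) := by
  rw [he.cm_charge_one_charge _ _ hm1 hm, smul_add, smul_comm k]
  congr 1
  · rw [← charge_mul_left]
    congr 1
    funext x
    simp only [Function.comp_apply, map_add, map_one, map_natCast, hg]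
  · obtain rfl | hm2 := (by omega : m = 1 ∨ 2 ≤ m)
    · simp [charge_zero_right]
    rw [← charge_mul_left k]
    congr 2
    funext x
    have hsub : ((m - 2 : ℕ) : ZMod 2) = m := by
      rw [Nat.cast_sub hm2, sub_eq_self]; rfl
    have hneg : ∀ t : ZMod 2, t - 1 = t + 1 := by decide
    simp only [Function.comp_apply, map_add, map_sub, map_one, map_natCast, hsub, hneg, hg]

theorem IsPeriodicTL.cm_charge_one_charge_comp_castHom_eq_zero (hN : Even N)
    {f f' : ZMod 2 → ℤ} (hf : ∀ t, f (t + 1) * f' t = 0) {m : ℕ} (hm : Odd m)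
    (hmN : m + 1 ≤ N) :
    cm (charge e (f ∘ ZMod.castHom hN.two_dvd (ZMod 2)) 1)
      (charge e (f' ∘ ZMod.castHom hN.two_dvd (ZMod 2)) m) = 0 :=
  he.cm_charge_one_charge_eq_zero hN
    (fun x d hd => by
      simp only [Function.comp_apply, map_add, map_natCast, ZMod.natCast_eq_one_iff_odd.2 hd, hf])
    hm hmN

end Parity

section Commutators

variable {A : Type*} [NonUnitalRing A] {N : ℕ} [NeZero N] {e : ZMod N → A}
  (he : IsPeriodicTL e) (hN : Even N)
include he hN

theorem IsPeriodicTL.cm_qev_qplus {m : ℕ} (hm : Odd m) (hmN : m + 2 ≤ N) :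
    cm (qev e 1) (qplus e m) = qminus e (m + 1) + qminus e (m - 1) := by
  have hm' : (m : ZMod 2) = 1 := ZMod.natCast_eq_one_iff_odd.2 hm
  rw [qev_eq_charge hN.two_dvd, qplus_eq_charge hN.two_dvd, qminus_eq_charge hN.two_dvd,
    qminus_eq_charge hN.two_dvd, he.cm_charge_one_charge_comp_castHom hN.two_dvd (k := 1)
      (g := signWeight) hm.pos hmN (by rw [hm']; decide),
    tlCoeff_of_ne_two (by rintro rfl; exact absurd hm (by decide)), one_smul, one_smul]

theorem IsPeriodicTL.cm_neg_qod_qplus {m : ℕ} (hm : Odd m) (hmN : m + 2 ≤ N) :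
    cm (-qod e 1) (qplus e m) = qminus e (m + 1) + qminus e (m - 1) := by
  have hm' : (m : ZMod 2) = 1 := ZMod.natCast_eq_one_iff_odd.2 hm
  rw [qod_eq_charge hN.two_dvd, ← charge_neg, ← Pi.neg_comp, qplus_eq_charge hN.two_dvd,
    qminus_eq_charge hN.two_dvd, qminus_eq_charge hN.two_dvd,
    he.cm_charge_one_charge_comp_castHom hN.two_dvd (k := 1) (g := signWeight) hm.pos hmN
      (by rw [hm']; decide),
    tlCoeff_of_ne_two (by rintro rfl; exact absurd hm (by decide)), one_smul, one_smul]

theorem IsPeriodicTL.cm_qev_qminus {m : ℕ} (hm : Even m) (hm1 : 1 ≤ m) (hmN : m + 2 ≤ N) :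
    cm (qev e 1) (qminus e m) = (-2 : ℤ) • (qev e (m + 1) + tlCoeff m • qev e (m - 1)) := by
  have hm' : (m : ZMod 2) = 0 := ZMod.natCast_eq_zero_iff_even.2 hm
  rw [qev_eq_charge hN.two_dvd, qminus_eq_charge hN.two_dvd, qev_eq_charge hN.two_dvd,
    qev_eq_charge hN.two_dvd, he.cm_charge_one_charge_comp_castHom hN.two_dvd (k := -2)
      (g := evenWeight) hm1 hmN (by rw [hm']; decide)]

theorem IsPeriodicTL.cm_neg_qod_qminus {m : ℕ} (hm : Even m) (hm1 : 1 ≤ m) (hmN : m + 2 ≤ N) :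
    cm (-qod e 1) (qminus e m) = (-2 : ℤ) • (qod e (m + 1) + tlCoeff m • qod e (m - 1)) := by
  have hm' : (m : ZMod 2) = 0 := ZMod.natCast_eq_zero_iff_even.2 hm
  rw [qod_eq_charge hN.two_dvd, ← charge_neg, ← Pi.neg_comp, qminus_eq_charge hN.two_dvd,
    qod_eq_charge hN.two_dvd, qod_eq_charge hN.two_dvd,
    he.cm_charge_one_charge_comp_castHom hN.two_dvd (k := -2) (g := oddWeight) hm1 hmN
      (by rw [hm']; decide)]

theorem IsPeriodicTL.cm_qev_qev {m : ℕ} (hm : Odd m) (hmN : m + 1 ≤ N) :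
    cm (qev e 1) (qev e m) = 0 := by
  rw [qev_eq_charge hN.two_dvd, qev_eq_charge hN.two_dvd]
  exact he.cm_charge_one_charge_comp_castHom_eq_zero hN (by decide) hm hmN

theorem IsPeriodicTL.cm_neg_qod_qod {m : ℕ} (hm : Odd m) (hmN : m + 1 ≤ N) :
    cm (-qod e 1) (qod e m) = 0 := by
  rw [qod_eq_charge hN.two_dvd, qod_eq_charge hN.two_dvd, cm_neg_left, neg_eq_zero]
  exact he.cm_charge_one_charge_comp_castHom_eq_zero hN (by decide) hm hmN

end Commutators

section TildeCharges

variable {A : Type*} [NonUnitalRing A]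

theorem sum_range_choose_smul_add_shift {M : Type*} [AddCommGroup M] (G : ℕ → M) (n k : ℕ) :
    ∑ l ∈ range (k + 1), (n.choose l : ℤ) • G l +
        ∑ l ∈ range (k + 1), (n.choose l : ℤ) • G (l + 1) =
      ∑ l ∈ range (k + 1), ((n + 1).choose l : ℤ) • G l +
        (n.choose k : ℤ) • G (k + 1) := by
  induction k with
  | zero => simp
  | succ k ih =>
    rw [sum_range_succ _ (k + 1), sum_range_succ _ (k + 1), sum_range_succ _ (k + 1),
      add_add_add_comm, ih, Nat.choose_succ_succ, Nat.cast_add, add_smul]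
    abel

theorem qt_congr {F G : ℕ → A} {m : ℕ}
    (h : ∀ l ≤ (m - 1) / 2, F (m - 2 * l) = G (m - 2 * l)) :
    qt F m = qt G m :=
  sum_congr rfl fun l hl => by rw [h l (Nat.lt_succ_iff.1 (mem_range.1 hl))]

theorem cm_qt (x : A) (F : ℕ → A) (m : ℕ) : cm x (qt F m) = qt (fun k => cm x (F k)) m := by
  simp [qt, cm_sum_right, cm_smul_right]

theorem qt_smul (c : ℤ) (F : ℕ → A) (m : ℕ) : qt (fun k => c • F k) m = c • qt F m := by
  simp [qt, smul_sum, smul_comm c]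

theorem qt_two_mul_add_one (F : ℕ → A) (s : ℕ) :
    qt F (2 * s + 1) =
      ∑ l ∈ range (s + 1), ((2 * s).choose l : ℤ) • F (2 * s + 1 - 2 * l) := by
  rw [qt, show (2 * s + 1 - 1) / 2 = s by omega, Nat.add_sub_cancel]

theorem qt_two_mul_add_two (F : ℕ → A) (s : ℕ) :
    qt F (2 * s + 2) =
      ∑ l ∈ range (s + 1), ((2 * s + 1).choose l : ℤ) • F (2 * s + 2 - 2 * l) := by
  rw [qt, show (2 * s + 2 - 1) / 2 = s by omega, show 2 * s + 2 - 1 = 2 * s + 1 by omega]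

theorem qt_pascal_odd (F : ℕ → A) (hF : F 0 = 0) (s : ℕ) :
    qt (fun k => F (k + 1) + F (k - 1)) (2 * s + 1) = qt F (2 * s + 2) := by
  have hsplit := sum_range_choose_smul_add_shift (fun l => F (2 * s + 2 - 2 * l)) (2 * s) s
  rw [show 2 * s + 2 - 2 * (s + 1) = 0 by omega, hF, smul_zero, add_zero] at hsplit
  rw [qt_two_mul_add_one, qt_two_mul_add_two, ← hsplit, ← sum_add_distrib]
  refine sum_congr rfl fun l hl => ?_
  have := mem_range.1 hl
  rw [smul_add, show 2 * s + 1 - 2 * l + 1 = 2 * s + 2 - 2 * l by omega,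
    show 2 * s + 1 - 2 * l - 1 = 2 * s + 2 - 2 * (l + 1) by omega]

theorem qt_pascal_even (F : ℕ → A) (s : ℕ) :
    qt (fun k => F (k + 1) + tlCoeff k • F (k - 1)) (2 * s + 2) = qt F (2 * s + 3) := by
  set G := fun l => F (2 * (s + 1) + 1 - 2 * l)
  have hterm : ∀ l ∈ range (s + 1), ((2 * s + 1).choose l : ℤ) •
      (F (2 * s + 2 - 2 * l + 1) + tlCoeff (2 * s + 2 - 2 * l) • F (2 * s + 2 - 2 * l - 1)) =
      ((2 * s + 1).choose l : ℤ) • G l + ((2 * s + 1).choose l : ℤ) • G (l + 1) +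
        if l = s then ((2 * s + 1).choose l : ℤ) • G (l + 1) else 0 := fun l hl => by
    have := mem_range.1 hl
    rw [show 2 * s + 2 - 2 * l + 1 = 2 * (s + 1) + 1 - 2 * l by omega,
      show 2 * s + 2 - 2 * l - 1 = 2 * (s + 1) + 1 - 2 * (l + 1) by omega]
    by_cases hls : l = s
    · subst hls
      simp [tlCoeff, two_smul, add_assoc, G]
    · rw [tlCoeff_of_ne_two (by omega), one_smul, if_neg hls, add_zero, smul_add]
  have hcentral :
      (2 * (s + 1)).choose (s + 1) = (2 * s + 1).choose s + (2 * s + 1).choose s := by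
    rw [show 2 * (s + 1) = 2 * s + 1 + 1 by ring, Nat.choose_succ_succ, Nat.choose_symm_half]
  rw [qt_two_mul_add_two, sum_congr rfl hterm, sum_add_distrib, sum_add_distrib,
    sum_range_choose_smul_add_shift, sum_ite_eq' _ s, if_pos (self_mem_range_succ s),
    show 2 * s + 1 + 1 = 2 * (s + 1) by ring, show 2 * s + 3 = 2 * (s + 1) + 1 by ring,
    qt_two_mul_add_one, sum_range_succ _ (s + 1), hcentral, Nat.cast_add, add_smul, add_assoc]

theorem cm_qt_odd {H : A} {F G : ℕ → A} {s : ℕ}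
    (hF : ∀ k ≤ 2 * s + 1, Odd k → cm H (F k) = G (k + 1) + G (k - 1)) (hG : G 0 = 0) :
    cm H (qt F (2 * s + 1)) = qt G (2 * s + 2) := by
  rw [cm_qt, ← qt_pascal_odd G hG]
  exact qt_congr fun l hl => hF _ (by omega) ⟨s - l, by omega⟩

theorem cm_qt_even {H : A} {F G : ℕ → A} {s : ℕ} (c : ℤ)
    (hF : ∀ k ≤ 2 * s + 2, Even k → 1 ≤ k →
      cm H (F k) = c • (G (k + 1) + tlCoeff k • G (k - 1))) :
    cm H (qt F (2 * s + 2)) = c • qt G (2 * s + 3) := by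
  rw [cm_qt, ← qt_pascal_even, ← qt_smul]
  exact qt_congr fun l hl => hF _ (by omega) ⟨s + 1 - l, by omega⟩ (by omega)

theorem cm_qt_eq_zero {H : A} {F : ℕ → A} {m : ℕ} (hm : Odd m)
    (hF : ∀ k ≤ m, Odd k → cm H (F k) = 0) : cm H (qt F m) = 0 := by
  obtain ⟨r, rfl⟩ := hm
  rw [cm_qt, qt_congr (G := fun _ => 0) fun l hl => hF _ (by omega) ⟨r - l, by omega⟩]
  simp [qt]

end TildeCharges

theorem qminus_zero {A : Type*} [NonUnitalRing A] {N : ℕ} (e : ZMod N → A) :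
    qminus e 0 = 0 := by
  simp [qminus, qq_zero]

theorem cm_ladder {A : Type*} [NonUnitalRing A] [Module ℂ A] [SMulCommClass ℂ A A]
    [IsScalarTower ℂ A A] {H P M X Q : A} (z : ℂ) (hQ : Q = P + (z / 2) • M) (hP : cm H P = M)
    (hM : cm H M = (-2 : ℤ) • X) (hX : cm H X = 0) :
    cm H Q = M - z • X ∧ cm H (cm H Q) = (-2 : ℤ) • X ∧ cm H (cm H (cm H Q)) = 0 ∧
      Q - z • cm H Q + (z ^ 2 / 2) • cm H (cm H Q) = P - (z / 2) • M := by
  have h₁ : cm H Q = M - z • X := by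
    rw [hQ, cm_add_right, cm_smul_right, hP, hM]
    module
  have h₂ : cm H (cm H Q) = (-2 : ℤ) • X := by
    rw [h₁, cm_sub_right, cm_smul_right, hM, hX, smul_zero, sub_zero]
  refine ⟨h₁, h₂, by rw [h₂, cm_smul_right, hX, smul_zero], ?_⟩
  rw [h₂, h₁, hQ]
  module

theorem stmt_15_general {A : Type*} [NonUnitalRing A] [Module ℂ A]
    [SMulCommClass ℂ A A] [IsScalarTower ℂ A A]
    (N : ℕ) (hNe : Even N) (z : ℂ)
    (e : ZMod N → A)
    (h1 : ∀ i : ZMod N, e i * e i = 0)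
    (h2 : ∀ i : ZMod N, e i * e (i + 1) * e i = e i)
    (h3 : ∀ i : ZMod N, e (i + 1) * e i * e (i + 1) = e (i + 1))
    (h4 : ∀ i j : ZMod N, j ≠ i - 1 → j ≠ i → j ≠ i + 1 → e i * e j = e j * e i) :
    ∀ s : ℕ, 2 * s + 3 < N →
      ∀ Q : A, Q = qt (qplus e) (2 * s + 1) + (z / 2) • qt (qminus e) (2 * s + 2) →
        cm (qev e 1) Q = qt (qminus e) (2 * s + 2) - z • qt (qev e) (2 * s + 3) ∧
        cm (qev e 1) (cm (qev e 1) Q) = (-2 : ℤ) • qt (qev e) (2 * s + 3) ∧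
        cm (qev e 1) (cm (qev e 1) (cm (qev e 1) Q)) = 0 ∧
        cm (qod e 1) Q = -(qt (qminus e) (2 * s + 2)) + z • qt (qod e) (2 * s + 3) ∧
        cm (qod e 1) (cm (qod e 1) Q) = (-2 : ℤ) • qt (qod e) (2 * s + 3) ∧
        cm (qod e 1) (cm (qod e 1) (cm (qod e 1) Q)) = 0 ∧
        Q - z • cm (qev e 1) Q + (z ^ 2 / 2) • cm (qev e 1) (cm (qev e 1) Q) =
          qt (qplus e) (2 * s + 1) - (z / 2) • qt (qminus e) (2 * s + 2) ∧
        Q + z • cm (qod e 1) Q + (z ^ 2 / 2) • cm (qod e 1) (cm (qod e 1) Q) =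
          qt (qplus e) (2 * s + 1) - (z / 2) • qt (qminus e) (2 * s + 2) := by
  intro s hs Q hQ
  have he : IsPeriodicTL e := ⟨h1, h2, h3, h4⟩
  have : NeZero N := ⟨by omega⟩
  have hodd : Odd (2 * s + 3) := ⟨s + 1, by ring⟩
  obtain ⟨e₁, e₂, e₃, e₄⟩ := cm_ladder z hQ
    (cm_qt_odd (fun k hk hk' => he.cm_qev_qplus hNe hk' (by omega)) (qminus_zero e))
    (cm_qt_even (-2) fun k hk hk' hk1 => he.cm_qev_qminus hNe hk' hk1 (by omega))
    (cm_qt_eq_zero hodd fun k hk hk' => he.cm_qev_qev hNe hk' (by omega))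
  obtain ⟨o₁, o₂, o₃, o₄⟩ := cm_ladder z hQ
    (cm_qt_odd (fun k hk hk' => he.cm_neg_qod_qplus hNe hk' (by omega)) (qminus_zero e))
    (cm_qt_even (-2) fun k hk hk' hk1 => he.cm_neg_qod_qminus hNe hk' hk1 (by omega))
    (cm_qt_eq_zero hodd fun k hk hk' => he.cm_neg_qod_qod hNe hk' (by omega))
  simp only [cm_neg_left, cm_neg_right, neg_neg, neg_eq_zero, smul_neg, sub_neg_eq_add]
    at o₁ o₂ o₃ o₄
  refine ⟨e₁, e₂, e₃, ?_, o₂, o₃, e₄, o₄⟩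
  rw [← neg_neg (cm _ Q), o₁, neg_sub, sub_eq_neg_add]

theorem stmt_15 {A : Type*} [NonUnitalRing A] [Module ℂ A]
    [SMulCommClass ℂ A A] [IsScalarTower ℂ A A]
    (N : ℕ) (hN : 4 ≤ N) (hNe : Even N) (z : ℂ)
    (e : ZMod N → A)
    (h1 : ∀ i : ZMod N, e i * e i = 0)
    (h2 : ∀ i : ZMod N, e i * e (i + 1) * e i = e i)
    (h3 : ∀ i : ZMod N, e (i + 1) * e i * e (i + 1) = e (i + 1))
    (h4 : ∀ i j : ZMod N, j ≠ i - 1 → j ≠ i → j ≠ i + 1 → e i * e j = e j * e i) :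
    ∀ s : ℕ, 2 * s + 3 < N →
      ∀ Q : A, Q = qt (qplus e) (2 * s + 1) + (z / 2) • qt (qminus e) (2 * s + 2) →
        cm (qev e 1) Q = qt (qminus e) (2 * s + 2) - z • qt (qev e) (2 * s + 3) ∧
        cm (qev e 1) (cm (qev e 1) Q) = (-2 : ℤ) • qt (qev e) (2 * s + 3) ∧
        cm (qev e 1) (cm (qev e 1) (cm (qev e 1) Q)) = 0 ∧
        cm (qod e 1) Q = -(qt (qminus e) (2 * s + 2)) + z • qt (qod e) (2 * s + 3) ∧
        cm (qod e 1) (cm (qod e 1) Q) = (-2 : ℤ) • qt (qod e) (2 * s + 3) ∧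
        cm (qod e 1) (cm (qod e 1) (cm (qod e 1) Q)) = 0 ∧
        Q - z • cm (qev e 1) Q + (z ^ 2 / 2) • cm (qev e 1) (cm (qev e 1) Q) =
          qt (qplus e) (2 * s + 1) - (z / 2) • qt (qminus e) (2 * s + 2) ∧
        Q + z • cm (qod e 1) Q + (z ^ 2 / 2) • cm (qod e 1) (cm (qod e 1) Q) =
          qt (qplus e) (2 * s + 1) - (z / 2) • qt (qminus e) (2 * s + 2) :=
  stmt_15_general N hNe z e h1 h2 h3 h4
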